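/- Let μ be a Borel probability measure and g a positive measurable function such that g^{2/p} is μ-integrable for all p ∈ (1,2], g² log g² is μ-integrable, and μ(g^{2/p}) > 0 for all p ∈ (1,2]. Then the functional G(p) = (p/(2(p−1)²)) · [ μ(g²) − μ(g^{2/p})^p · (μ(g²)/μ(g^{2/p})^p)^{(2/p)−1} ] satisfies G(2) = Var_μ(g) = μ(g²) − μ(g)², and G(p) tends to Ent_μ(g²) = μ(g² log g²) − μ(g²) log μ(g²) as p tends to 1 from above. -/

import Mathlib

/-!
Write `A = μ(g²)`, `N p = μ(g^{2/p})` and `φ p = log N p - log A / p`, so that `φ 1 = 0`.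
Taking logarithms, `G p = -p A · (e^u - 1)/u · φ p/(p - 1)` with `u = 2 (p - 1) φ p`.
By the mean value theorem the difference quotients of `p ↦ g^{2/p}` at `1` are dominated by
`|g² log g²| + 2` on `(1, 2]`, so dominated convergence gives `N'(1⁺) = -μ(g² log g²)`.
Hence `φ p/(p - 1) → φ'(1⁺) = -μ(g² log g²)/A + log A` and `u → 0`, so
`G p → μ(g² log g²) - A log A`.
-/

open MeasureTheory Filter Topology Set Real

lemma hasDerivAt_rpow_two_div {c q : ℝ} (hc : 0 < c) (hq : q ≠ 0) :
    HasDerivAt (fun t => c ^ (2 / t)) (log c * (-2 / q ^ 2) * c ^ (2 / q)) q := by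
  have h : HasDerivAt (fun t : ℝ => 2 / t) (-2 / q ^ 2) q := by
    simpa [div_eq_mul_inv, neg_div] using (hasDerivAt_inv hq).const_mul (2 : ℝ)
  exact h.const_rpow hc

lemma rpow_mul_abs_log_le {c s : ℝ} (hc : 0 < c) (hs1 : 1 ≤ s) (hs2 : s ≤ 2) :
    c ^ s * |log c| ≤ c ^ (2 : ℝ) * |log c| + 1 := by
  rcases le_or_gt 1 c with h1 | h1
  · have hcs : c ^ s ≤ c ^ (2 : ℝ) := rpow_le_rpow_of_exponent_le h1 hs2
    nlinarith [abs_nonneg (log c)]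
  · have hcs : c ^ s ≤ c := by simpa using rpow_le_rpow_of_exponent_ge hc h1.le hs1
    have hlog : |log c * c| < 1 := abs_log_mul_self_lt c hc h1.le
    rw [abs_mul, abs_of_pos hc] at hlog
    have hcs' := mul_le_mul_of_nonneg_right hcs (abs_nonneg (log c))
    have hnonneg : 0 ≤ c ^ (2 : ℝ) * |log c| := by positivity
    linarith

lemma abs_slope_rpow_two_div_le {c p : ℝ} (hc : 0 < c) (hp : p ∈ Ioc (1 : ℝ) 2) :
    |slope (fun t => c ^ (2 / t)) 1 p| ≤ |c ^ (2 : ℝ) * log (c ^ (2 : ℝ))| + 2 := by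
  have hderiv : ∀ q ∈ Icc (1 : ℝ) 2, HasDerivWithinAt (fun t => c ^ (2 / t))
      (log c * (-2 / q ^ 2) * c ^ (2 / q)) (Icc 1 2) q := fun q hq =>
    (hasDerivAt_rpow_two_div hc (by linarith [hq.1])).hasDerivWithinAt
  have hbound : ∀ q ∈ Icc (1 : ℝ) 2,
      ‖log c * (-2 / q ^ 2) * c ^ (2 / q)‖ ≤ |c ^ (2 : ℝ) * log (c ^ (2 : ℝ))| + 2 := by
    rintro q ⟨hq1, hq2⟩
    have hq : 2 / q ^ 2 ≤ 2 := by
      rw [div_le_iff₀ (by positivity)]; nlinarith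
    have hs := rpow_mul_abs_log_le hc (s := 2 / q)
      (by rw [le_div_iff₀ (by linarith)]; linarith)
      (by rw [div_le_iff₀ (by linarith)]; linarith)
    have hnorm :
        ‖log c * (-2 / q ^ 2) * c ^ (2 / q)‖ = 2 / q ^ 2 * (c ^ (2 / q) * |log c|) := by
      rw [Real.norm_eq_abs, abs_mul, abs_mul, abs_div, abs_neg, abs_two,
        abs_of_pos (by positivity : (0 : ℝ) < q ^ 2), abs_of_pos (rpow_pos_of_pos hc _)]
      ring
    have hrhs : |c ^ (2 : ℝ) * log (c ^ (2 : ℝ))| = 2 * (c ^ (2 : ℝ) * |log c|) := by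
      rw [log_rpow hc, abs_mul, abs_of_pos (rpow_pos_of_pos hc _), abs_mul, abs_two]
      ring
    rw [hnorm, hrhs]
    calc 2 / q ^ 2 * (c ^ (2 / q) * |log c|) ≤ 2 * (c ^ (2 / q) * |log c|) := by gcongr
      _ ≤ 2 * (c ^ (2 : ℝ) * |log c|) + 2 := by linarith
  have h := (convex_Icc (1 : ℝ) 2).norm_image_sub_le_of_norm_hasDerivWithin_le hderiv hbound
    ⟨le_rfl, one_le_two⟩ ⟨hp.1.le, hp.2⟩
  rw [slope_def_field, abs_div, abs_of_pos (sub_pos.2 hp.1)]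
  rw [Real.norm_eq_abs, Real.norm_eq_abs, abs_of_pos (sub_pos.2 hp.1)] at h
  exact (div_le_iff₀ (sub_pos.2 hp.1)).2 h

lemma hasDerivWithinAt_integral_rpow_two_div {Ω : Type*} [MeasurableSpace Ω] {μ : Measure Ω}
    [IsFiniteMeasure μ] {g : Ω → ℝ} (hgpos : ∀ x, 0 < g x)
    (hg2 : Integrable (fun x => g x ^ (2 : ℝ)) μ)
    (hint : ∀ p ∈ Ioc (1 : ℝ) 2, Integrable (fun x => g x ^ (2 / p)) μ)
    (hent : Integrable (fun x => g x ^ (2 : ℝ) * log (g x ^ (2 : ℝ))) μ) :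
    HasDerivWithinAt (fun p : ℝ => ∫ x, g x ^ (2 / p) ∂μ)
      (-∫ x, g x ^ (2 : ℝ) * log (g x ^ (2 : ℝ)) ∂μ) (Ioi 1) 1 := by
  have hIoc : Ioc (1 : ℝ) 2 ∈ 𝓝[>] 1 := Ioc_mem_nhdsGT one_lt_two
  have hslope : ∀ p ∈ Ioc (1 : ℝ) 2, slope (fun q : ℝ => ∫ x, g x ^ (2 / q) ∂μ) 1 p =
      ∫ x, slope (fun t : ℝ => g x ^ (2 / t)) 1 p ∂μ := fun p hp => by
    simp only [slope_def_field]
    rw [integral_div, integral_sub (hint p hp) (by simpa using hg2)]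
  have hpointwise : ∀ x, Tendsto (slope (fun t : ℝ => g x ^ (2 / t)) 1) (𝓝[>] 1)
      (𝓝 (-(g x ^ (2 : ℝ) * log (g x ^ (2 : ℝ))))) := fun x => by
    have h := (hasDerivAt_rpow_two_div (hgpos x) one_ne_zero).tendsto_slope.mono_left
      (nhdsGT_le_nhdsNE 1)
    convert h using 2
    rw [log_rpow (hgpos x)]
    norm_num
    ring
  rw [hasDerivWithinAt_iff_tendsto_slope, sdiff_singleton_eq_self self_notMem_Ioi,
    ← integral_neg]
  refine Tendsto.congr' (eventuallyEq_of_mem hIoc fun p hp => (hslope p hp).symm)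
    (tendsto_integral_filter_of_dominated_convergence _ ?_ ?_ (hent.abs.add (integrable_const 2))
      (ae_of_all _ hpointwise))
  · filter_upwards [hIoc] with p hp
    simp only [slope_def_field]
    exact (((hint p hp).sub (by simpa using hg2)).div_const _).aestronglyMeasurable
  · filter_upwards [hIoc] with p hp
    exact ae_of_all _ fun x => abs_slope_rpow_two_div_le (hgpos x) hp

noncomputable def interpolationFunctional (A N p : ℝ) : ℝ :=
  p / (2 * (p - 1) ^ 2) * (A - N ^ p * (A / N ^ p) ^ (2 / p - 1))

lemma interpolationFunctional_eq_dslope_exp {A N p : ℝ} (hA : 0 < A) (hN : 0 < N)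
    (hp1 : p ≠ 1) (hp0 : p ≠ 0) :
    interpolationFunctional A N p =
      -(p * A) * dslope exp 0 (2 * (p - 1) * (log N - log A / p)) *
        ((log N - log A / p) / (p - 1)) := by
  set u := 2 * (p - 1) * (log N - log A / p) with hu
  have hNp : 0 < N ^ p := rpow_pos_of_pos hN p
  have hexp : N ^ p * (A / N ^ p) ^ (2 / p - 1) = A * exp u := by
    rw [rpow_def_of_pos (div_pos hA hNp), log_div hA.ne' hNp.ne', log_rpow hN,
      rpow_def_of_pos hN, ← exp_add, ← exp_log hA, ← exp_add, log_exp]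
    congr 1
    rw [hu]
    field_simp
    ring
  have hdslope : u * dslope exp 0 u = exp u - 1 := by
    simpa using sub_smul_dslope exp 0 u
  have hp1' : p - 1 ≠ 0 := sub_ne_zero.2 hp1
  rw [interpolationFunctional, hexp,
    show A - A * exp u = -A * (u * dslope exp 0 u) by rw [hdslope]; ring, hu]
  field_simp

lemma tendsto_interpolationFunctional {N : ℝ → ℝ} {A N' : ℝ} (hA : 0 < A) (hN1 : N 1 = A)
    (hN : HasDerivWithinAt N N' (Ioi 1) 1) :
    Tendsto (fun p => interpolationFunctional A (N p) p) (𝓝[>] 1) (𝓝 (-N' - A * log A)) := by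
  set φ : ℝ → ℝ := fun p => log (N p) - log A / p
  have hφ : HasDerivWithinAt φ (N' / A + log A) (Ioi 1) 1 := by
    have hinv : HasDerivAt (fun p : ℝ => log A / p) (-log A) 1 := by
      simpa [div_eq_mul_inv] using (hasDerivAt_inv (one_ne_zero (α := ℝ))).const_mul (log A)
    have h := (hN.log (hN1 ▸ hA.ne')).sub hinv.hasDerivWithinAt
    rwa [hN1, sub_neg_eq_add] at h
  have hφ1 : φ 1 = 0 := by simp [φ, hN1]
  have hφ_slope : Tendsto (fun p => φ p / (p - 1)) (𝓝[>] 1) (𝓝 (N' / A + log A)) := by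
    have h := hasDerivWithinAt_iff_tendsto_slope.1 hφ
    rw [sdiff_singleton_eq_self self_notMem_Ioi] at h
    refine h.congr fun p => ?_
    rw [slope_def_field, hφ1, sub_zero]
  have hu : Tendsto (fun p => 2 * (p - 1) * φ p) (𝓝[>] 1) (𝓝 0) := by
    have h2 : Tendsto (fun p : ℝ => 2 * (p - 1)) (𝓝[>] 1) (𝓝 0) :=
      tendsto_nhdsWithin_of_tendsto_nhds
        ((by fun_prop : Continuous fun p : ℝ => 2 * (p - 1)).tendsto' 1 0 (by norm_num))
    simpa [hφ1] using h2.mul hφ.continuousWithinAt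
  have hdslope : Tendsto (dslope exp 0) (𝓝 0) (𝓝 1) := by
    simpa using (continuousAt_dslope_same.2 (differentiableAt_exp (x := (0 : ℝ)))).tendsto
  have hlim := (((tendsto_id.mono_left nhdsWithin_le_nhds).mul_const A).neg.mul
    (hdslope.comp hu)).mul hφ_slope
  have hval : -(1 * A) * 1 * (N' / A + log A) = -N' - A * log A := by field_simp; ring
  rw [hval] at hlim
  have hNpos : ∀ᶠ p in 𝓝[>] 1, 0 < N p :=
    hN.continuousWithinAt.eventually_const_lt (hN1 ▸ hA)
  refine hlim.congr' ?_
  filter_upwards [hNpos, self_mem_nhdsWithin] with p hNp (hp : 1 < p)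
  rw [interpolationFunctional_eq_dslope_exp hA hNp hp.ne' (by linarith)]
  rfl

theorem refined_phi_entropy_functional_interpolation
    {Ω : Type*} [MeasurableSpace Ω] (μ : Measure Ω) [IsProbabilityMeasure μ]
    (g : Ω → ℝ) (hgpos : ∀ x, 0 < g x)
    (hg2 : Integrable (fun x => g x ^ (2 : ℝ)) μ)
    (hint : ∀ p ∈ Set.Ioc (1 : ℝ) 2, Integrable (fun x => g x ^ (2 / p)) μ)
    (hent : Integrable (fun x => g x ^ (2 : ℝ) * Real.log (g x ^ (2 : ℝ))) μ)
    (G : ℝ → ℝ)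
    (hG : ∀ p : ℝ, G p =
      p / (2 * (p - 1) ^ 2) *
        ((∫ x, g x ^ (2 : ℝ) ∂μ) - (∫ x, g x ^ (2 / p) ∂μ) ^ p *
          ((∫ x, g x ^ (2 : ℝ) ∂μ) / (∫ x, g x ^ (2 / p) ∂μ) ^ p) ^ (2 / p - 1))) :
    G 2 = (∫ x, g x ^ (2 : ℝ) ∂μ) - (∫ x, g x ∂μ) ^ 2 ∧
      Tendsto G (𝓝[>] (1 : ℝ))
        (𝓝 ((∫ x, g x ^ (2 : ℝ) * Real.log (g x ^ (2 : ℝ)) ∂μ) -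
          (∫ x, g x ^ (2 : ℝ) ∂μ) * Real.log (∫ x, g x ^ (2 : ℝ) ∂μ))) := by
  refine ⟨by rw [hG]; norm_num, ?_⟩
  set A := ∫ x, g x ^ (2 : ℝ) ∂μ
  have hA : 0 < A := (integral_pos_iff_support_of_nonneg
    (fun x => (rpow_pos_of_pos (hgpos x) _).le) hg2).2 (by simp [Function.support, (hgpos _).ne'])
  have hN1 : (fun p : ℝ => ∫ x, g x ^ (2 / p) ∂μ) 1 = A := by simp [A]
  have h := tendsto_interpolationFunctional hA hN1
    (hasDerivWithinAt_integral_rpow_two_div hgpos hg2 hint hent)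
  rw [neg_neg] at h
  exact h.congr fun p => (hG p).symm
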